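/- In the algebra N ⊆ UT_6(F) with the reflection involution θ_6, the product [A_1, A_2][A_3, A_4][A_5, A_6] is central in N for all symmetric elements A_1,...,A_6 of (N, θ_6), and there is a choice of symmetric elements making this product equal to the nonzero central element e_{16}. In particular [x_1^+,x_2^+][x_3^+,x_4^+][x_5^+,x_6^+] is a proper central *-polynomial for (N, θ_6). -/

import Mathlib

open Matrix

/-!
Commutators of elements of `N` vanish on the diagonal (the diagonal of `N` is commutative) and,
like `N` itself, on the block `{1,2} × {3,4}` (0-based indices). An entry `(i, j)` of a product of
three such matrices comes from a chain `i < k < l < j` of allowed positions, and every such chain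
runs from `0` to `5`; so the product is a multiple of `e_{16} = single 0 5 1`, which is central in
`N` because `N` forces `M 0 0 = M 5 5`. The symmetric elements `e + e^θ` for suitable matrix units
`e` realise `e_{16}` itself.
-/

/-- The reflection involution `θ_6` on `M_6(F)`. -/
def reflInv {F : Type*} [Field F] (A : Matrix (Fin 6) (Fin 6) F) :
    Matrix (Fin 6) (Fin 6) F :=
  Matrix.of fun i j => A j.rev i.rev

/-- Membership in the algebra `N ⊆ UT_6(F)`. -/
def memN {F : Type*} [Field F] (M : Matrix (Fin 6) (Fin 6) F) : Prop :=
  (∀ i j : Fin 6, j < i → M i j = 0) ∧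
  M 0 0 = M 5 5 ∧ M 1 1 = M 4 4 ∧ M 2 2 = M 3 3 ∧
  M 1 3 = 0 ∧ M 1 4 = 0 ∧ M 2 3 = 0 ∧ M 2 4 = 0

namespace Matrix

variable {ι R : Type*}

abbrev SupportedOn [Zero R] (r : ι → ι → Prop) (M : Matrix ι ι R) : Prop :=
  ∀ i j, M i j ≠ 0 → r i j

section Zero

variable [Zero R] {r s : ι → ι → Prop} {M : Matrix ι ι R}

theorem SupportedOn.mono (hM : M.SupportedOn r) (hrs : ∀ i j, r i j → s i j) :
    M.SupportedOn s :=
  fun i j h => hrs i j (hM i j h)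

theorem SupportedOn.apply_eq_zero (hM : M.SupportedOn r) {i j : ι} (h : ¬ r i j) : M i j = 0 :=
  not_not.1 (mt (hM i j) h)

theorem supportedOn_single [DecidableEq ι] (a b : ι) (c : R) :
    (single a b c).SupportedOn fun i j => i = a ∧ j = b := by
  intro i j h
  by_contra hij
  exact h (single_apply_of_ne _ _ _ _ _ fun h' => hij ⟨h'.1.symm, h'.2.symm⟩)

theorem eq_single_of_supportedOn [DecidableEq ι] {a b : ι}
    (hM : M.SupportedOn fun i j => i = a ∧ j = b) : M = single a b (M a b) := by
  ext i j
  by_cases hij : i = a ∧ j = b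
  · obtain ⟨rfl, rfl⟩ := hij
    rw [single_apply_same]
  · rw [hM.apply_eq_zero hij, single_apply_of_ne _ _ _ _ _ fun h => hij ⟨h.1.symm, h.2.symm⟩]

end Zero

theorem SupportedOn.add [AddZeroClass R] {r s : ι → ι → Prop} {M N : Matrix ι ι R}
    (hM : M.SupportedOn r) (hN : N.SupportedOn s) :
    (M + N).SupportedOn fun i j => r i j ∨ s i j := by
  intro i j h
  by_contra! hij
  exact h (by rw [add_apply, hM.apply_eq_zero hij.1, hN.apply_eq_zero hij.2, add_zero])

theorem SupportedOn.sub [SubNegZeroMonoid R] {r : ι → ι → Prop} {M N : Matrix ι ι R}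
    (hM : M.SupportedOn r) (hN : N.SupportedOn r) : (M - N).SupportedOn r := by
  intro i j h
  by_contra hij
  exact h (by rw [sub_apply, hM.apply_eq_zero hij, hN.apply_eq_zero hij, sub_zero])

theorem SupportedOn.mul [Fintype ι] [NonUnitalNonAssocSemiring R] {r s : ι → ι → Prop}
    {M N : Matrix ι ι R} (hM : M.SupportedOn r) (hN : N.SupportedOn s) :
    (M * N).SupportedOn (Relation.Comp r s) := by
  intro i j h
  obtain ⟨k, -, hk⟩ := Finset.exists_ne_zero_of_sum_ne_zero h
  exact ⟨k, hM i k (left_ne_zero_of_mul hk), hN k j (right_ne_zero_of_mul hk)⟩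

theorem IsUpperTriangular.mul_apply_self [LinearOrder ι] [Fintype ι]
    [NonUnitalNonAssocSemiring R]
    {A B : Matrix ι ι R} (hA : A.IsUpperTriangular) (hB : B.IsUpperTriangular) (i : ι) :
    (A * B) i i = A i i * B i i := by
  rw [mul_apply]
  refine Finset.sum_eq_single i (fun k _ hki => ?_) (by simp)
  rcases hki.lt_or_gt with hk | hk
  · rw [hA hk, zero_mul]
  · rw [hB hk, mul_zero]

theorem IsUpperTriangular.commute_single_zero_last [CommSemiring R] {n : ℕ}
    {X : Matrix (Fin (n + 1)) (Fin (n + 1)) R} (hX : X.IsUpperTriangular)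
    (hdiag : X 0 0 = X (Fin.last n) (Fin.last n)) (c : R) :
    single 0 (Fin.last n) c * X = X * single 0 (Fin.last n) c := by
  ext i j
  by_cases hi : i = 0 <;> by_cases hj : j = Fin.last n
  · subst hi hj
    rw [single_mul_apply_same, mul_single_apply_same, hdiag, mul_comm]
  · subst hi
    rw [single_mul_apply_same, hX (i := Fin.last n) (j := j) (Fin.lt_last_iff_ne_last.2 hj),
      mul_zero, mul_single_apply_of_ne _ _ _ _ _ hj]
  · subst hj
    rw [single_mul_apply_of_ne _ _ _ _ _ hi, mul_single_apply_same,
      hX (Fin.pos_iff_ne_zero.2 hi : 0 < i), zero_mul]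
  · rw [single_mul_apply_of_ne _ _ _ _ _ hi, mul_single_apply_of_ne _ _ _ _ _ hj]

end Matrix

def nSupport (i j : Fin 6) : Prop :=
  i ≤ j ∧ ¬(1 ≤ i ∧ i ≤ 2 ∧ 3 ≤ j ∧ j ≤ 4)

instance (i j : Fin 6) : Decidable (nSupport i j) := by unfold nSupport; infer_instance

theorem nSupport_trans {i j k : Fin 6} : nSupport i j → nSupport j k → nSupport i k := by
  revert i j k; decide

theorem nSupport_rev {i j : Fin 6} : nSupport i j → nSupport j.rev i.rev := by
  revert i j; decide

theorem eq_zero_five_of_strict_chain {i k l j : Fin 6} :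
    i < k ∧ nSupport i k → k < l ∧ nSupport k l → l < j ∧ nSupport l j → i = 0 ∧ j = 5 := by
  revert i k l j; decide

section

variable {F : Type*} [Field F]

theorem reflInv_single (i j : Fin 6) (c : F) : reflInv (single i j c) = single j.rev i.rev c := by
  ext a b
  refine if_congr ?_ rfl rfl
  constructor <;> rintro ⟨rfl, rfl⟩ <;> simp

theorem reflInv_add (A B : Matrix (Fin 6) (Fin 6) F) : reflInv (A + B) = reflInv A + reflInv B :=
  rfl

theorem memN.isUpperTriangular {M : Matrix (Fin 6) (Fin 6) F} (hM : memN M) :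
    M.IsUpperTriangular :=
  fun i j h => hM.1 i j h

theorem memN.supportedOn {M : Matrix (Fin 6) (Fin 6) F} (hM : memN M) :
    M.SupportedOn nSupport := by
  obtain ⟨hlow, -, -, -, h13, h14, h23, h24⟩ := hM
  intro i j h
  refine ⟨not_lt.1 fun hji => h (hlow i j hji), fun hblock => ?_⟩
  obtain ⟨rfl | rfl, rfl | rfl⟩ : (i = 1 ∨ i = 2) ∧ (j = 3 ∨ j = 4) := by omega
  all_goals contradiction

theorem memN_of_supportedOn_of_reflInv_eq {M : Matrix (Fin 6) (Fin 6) F}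
    (hM : M.SupportedOn nSupport) (hθ : reflInv M = M) : memN M := by
  have hdiag (k : Fin 6) : M k.rev k.rev = M k k := congrFun (congrFun hθ k) k
  refine ⟨fun i j hji => hM.apply_eq_zero fun h => absurd h.1 (not_le.2 hji),
    (hdiag 0).symm, (hdiag 1).symm, (hdiag 2).symm, ?_, ?_, ?_, ?_⟩ <;>
  exact hM.apply_eq_zero (by decide)

theorem memN.commutator_supportedOn {A B : Matrix (Fin 6) (Fin 6) F}
    (hA : memN A) (hB : memN B) :
    (A * B - B * A).SupportedOn fun i j => i < j ∧ nSupport i j := by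
  intro i j h
  obtain ⟨k, hik, hkj⟩ :=
    ((hA.supportedOn.mul hB.supportedOn).sub (hB.supportedOn.mul hA.supportedOn)) i j h
  refine ⟨lt_of_le_of_ne (hik.1.trans hkj.1) ?_, nSupport_trans hik hkj⟩
  rintro rfl
  apply h
  rw [Matrix.sub_apply, hA.isUpperTriangular.mul_apply_self hB.isUpperTriangular,
    hB.isUpperTriangular.mul_apply_self hA.isUpperTriangular, mul_comm, sub_self]

theorem memN.commutator_mul_commutator_mul_commutator_eq_single
    {A₁ A₂ A₃ A₄ A₅ A₆ : Matrix (Fin 6) (Fin 6) F} (h₁ : memN A₁) (h₂ : memN A₂) (h₃ : memN A₃)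
    (h₄ : memN A₄) (h₅ : memN A₅) (h₆ : memN A₆) :
    let P := (A₁ * A₂ - A₂ * A₁) * (A₃ * A₄ - A₄ * A₃) * (A₅ * A₆ - A₆ * A₅)
    P = single 0 5 (P 0 5) :=
  eq_single_of_supportedOn <|
    (((h₁.commutator_supportedOn h₂).mul (h₃.commutator_supportedOn h₄)).mul
      (h₅.commutator_supportedOn h₆)).mono
      fun _ _ ⟨_, ⟨_, hik, hkl⟩, hlj⟩ => eq_zero_five_of_strict_chain hik hkl hlj

theorem memN.commute_single_zero_five {X : Matrix (Fin 6) (Fin 6) F} (hX : memN X) (c : F) :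
    single 0 5 c * X = X * single 0 5 c :=
  hX.isUpperTriangular.commute_single_zero_last hX.2.1 c

def symmUnit (i j : Fin 6) : Matrix (Fin 6) (Fin 6) F :=
  single i j 1 + single j.rev i.rev 1

theorem reflInv_symmUnit (i j : Fin 6) : reflInv (symmUnit (F := F) i j) = symmUnit i j := by
  rw [symmUnit, reflInv_add, reflInv_single, reflInv_single, Fin.rev_rev, Fin.rev_rev, add_comm]

theorem memN_symmUnit {i j : Fin 6} (h : nSupport i j) : memN (symmUnit (F := F) i j) :=
  memN_of_supportedOn_of_reflInv_eq
    (((supportedOn_single i j 1).add (supportedOn_single j.rev i.rev 1)).mono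
      fun a b hab => by rcases hab with ⟨rfl, rfl⟩ | ⟨rfl, rfl⟩ <;> [exact h; exact nSupport_rev h])
    (reflInv_symmUnit i j)

theorem symmUnit_commutator_product :
    (symmUnit 0 0 * symmUnit 0 1 - symmUnit 0 1 * symmUnit 0 0 : Matrix (Fin 6) (Fin 6) F) *
        (symmUnit 1 1 * symmUnit 1 2 - symmUnit 1 2 * symmUnit 1 1) *
        (symmUnit 0 3 * symmUnit 0 0 - symmUnit 0 0 * symmUnit 0 3) =
      single 0 5 1 := by
  simp [symmUnit, add_mul, mul_add, sub_mul, mul_sub]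

end

theorem stmt_10_general (F : Type*) [Field F] :
    (∀ A₁ A₂ A₃ A₄ A₅ A₆ : Matrix (Fin 6) (Fin 6) F,
      memN A₁ → memN A₂ → memN A₃ → memN A₄ → memN A₅ → memN A₆ →
      reflInv A₁ = A₁ → reflInv A₂ = A₂ → reflInv A₃ = A₃ →
      reflInv A₄ = A₄ → reflInv A₅ = A₅ → reflInv A₆ = A₆ →
      ∀ X : Matrix (Fin 6) (Fin 6) F, memN X →
        ((A₁ * A₂ - A₂ * A₁) * (A₃ * A₄ - A₄ * A₃) * (A₅ * A₆ - A₆ * A₅)) * X =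
        X * ((A₁ * A₂ - A₂ * A₁) * (A₃ * A₄ - A₄ * A₃) * (A₅ * A₆ - A₆ * A₅))) ∧
    (∃ A₁ A₂ A₃ A₄ A₅ A₆ : Matrix (Fin 6) (Fin 6) F,
      memN A₁ ∧ memN A₂ ∧ memN A₃ ∧ memN A₄ ∧ memN A₅ ∧ memN A₆ ∧
      reflInv A₁ = A₁ ∧ reflInv A₂ = A₂ ∧ reflInv A₃ = A₃ ∧
      reflInv A₄ = A₄ ∧ reflInv A₅ = A₅ ∧ reflInv A₆ = A₆ ∧
      (A₁ * A₂ - A₂ * A₁) * (A₃ * A₄ - A₄ * A₃) * (A₅ * A₆ - A₆ * A₅) =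
        Matrix.single 0 5 (1 : F)) ∧
    Matrix.single 0 5 (1 : F) ≠ (0 : Matrix (Fin 6) (Fin 6) F) := by
  refine ⟨fun A₁ A₂ A₃ A₄ A₅ A₆ h₁ h₂ h₃ h₄ h₅ h₆ _ _ _ _ _ _ X hX => ?_,
    ⟨symmUnit 0 0, symmUnit 0 1, symmUnit 1 1, symmUnit 1 2, symmUnit 0 3, symmUnit 0 0,
      memN_symmUnit (by decide), memN_symmUnit (by decide), memN_symmUnit (by decide),
      memN_symmUnit (by decide), memN_symmUnit (by decide), memN_symmUnit (by decide),
      reflInv_symmUnit _ _, reflInv_symmUnit _ _, reflInv_symmUnit _ _,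
      reflInv_symmUnit _ _, reflInv_symmUnit _ _, reflInv_symmUnit _ _,
      symmUnit_commutator_product⟩,
    fun h => one_ne_zero (α := F) (by simpa using congrFun₂ h 0 5)⟩
  rw [memN.commutator_mul_commutator_mul_commutator_eq_single h₁ h₂ h₃ h₄ h₅ h₆]
  exact hX.commute_single_zero_five _

/-- `[x₁⁺,x₂⁺][x₃⁺,x₄⁺][x₅⁺,x₆⁺]` is a proper central `*`-polynomial
for `(N, θ_6)`: every such product of commutators of symmetric elements of `N` is
central in `N`, and some evaluation equals the nonzero central element `e_{16}`. -/
theorem stmt_10 (F : Type*) [Field F] [CharZero F] :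
    (∀ A₁ A₂ A₃ A₄ A₅ A₆ : Matrix (Fin 6) (Fin 6) F,
      memN A₁ → memN A₂ → memN A₃ → memN A₄ → memN A₅ → memN A₆ →
      reflInv A₁ = A₁ → reflInv A₂ = A₂ → reflInv A₃ = A₃ →
      reflInv A₄ = A₄ → reflInv A₅ = A₅ → reflInv A₆ = A₆ →
      ∀ X : Matrix (Fin 6) (Fin 6) F, memN X →
        ((A₁ * A₂ - A₂ * A₁) * (A₃ * A₄ - A₄ * A₃) * (A₅ * A₆ - A₆ * A₅)) * X =
        X * ((A₁ * A₂ - A₂ * A₁) * (A₃ * A₄ - A₄ * A₃) * (A₅ * A₆ - A₆ * A₅))) ∧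
    (∃ A₁ A₂ A₃ A₄ A₅ A₆ : Matrix (Fin 6) (Fin 6) F,
      memN A₁ ∧ memN A₂ ∧ memN A₃ ∧ memN A₄ ∧ memN A₅ ∧ memN A₆ ∧
      reflInv A₁ = A₁ ∧ reflInv A₂ = A₂ ∧ reflInv A₃ = A₃ ∧
      reflInv A₄ = A₄ ∧ reflInv A₅ = A₅ ∧ reflInv A₆ = A₆ ∧
      (A₁ * A₂ - A₂ * A₁) * (A₃ * A₄ - A₄ * A₃) * (A₅ * A₆ - A₆ * A₅) =
        Matrix.single 0 5 (1 : F)) ∧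
    Matrix.single 0 5 (1 : F) ≠ (0 : Matrix (Fin 6) (Fin 6) F) :=
  stmt_10_general F
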